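/- arXiv:2110.07988 — 2 statements merged into one kernel-verified Lean document; each statement's English description precedes it below -/
import Mathlib

section
/- Let Λ ⊂ ℤ be a set and let S ⊂ [0,1) be a measurable set. Then the system E(Λ) is a frame for L²(S) if and only if the system E(ℤ \ Λ) is a Riesz sequence in L²([0,1) \ S). -/
/-!
By Parseval's identity on `[0,1)`, for `f ∈ L²(S)` the squared coefficients `|⟨f, e_n⟩|²` over
`n ∈ Λ` and over `n ∉ Λ` add up to `‖f‖²`; so `E(Λ)` is a frame for `L²(S)` exactly when the
analysis operator `f ↦ (⟨f, e_n⟩)_{n ∉ Λ}` has squared norm at most some `K < 1`. Dually, a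
trigonometric polynomial `p = ∑_{n ∉ Λ} c_n e_n` has `‖p‖²_{[0,1)} = ‖c‖²`, split between `S`
and `[0,1) \ S`; so `E(ℤ \ Λ)` is a Riesz sequence in `L²([0,1) \ S)` exactly when the
synthesis operator `c ↦ p|_S` has squared norm at most some `K < 1`. The two operators are
adjoint, hence have the same norm.
-/

open MeasureTheory Real Set
open scoped Classical

/-- The exponential function `e^{2πiλx}`. -/
noncomputable def expf (l : ℝ) : ℝ → ℂ :=
  fun x => Complex.exp (2 * (Real.pi : ℂ) * Complex.I * (l : ℂ) * (x : ℂ))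

/-- The system `E(Λ) = {e^{2πiλx} : λ ∈ Λ}` is a Riesz sequence in `L²(S)`:
there are `0 < A ≤ B < ∞` such that
`A‖c‖² ≤ ‖∑ c_λ e^{2πiλ·}‖²_{L²(S)} ≤ B‖c‖²` for all (finitely supported) coefficients. -/
def IsRieszSeqExp (Λ S : Set ℝ) : Prop :=
  ∃ A B : ℝ, 0 < A ∧ A ≤ B ∧
    ∀ c : ↥Λ →₀ ℂ,
      (A * ∑ l ∈ c.support, ‖c l‖ ^ 2 ≤
          ∫ x in S, ‖∑ l ∈ c.support, c l * expf (l : ℝ) x‖ ^ 2) ∧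
      (∫ x in S, ‖∑ l ∈ c.support, c l * expf (l : ℝ) x‖ ^ 2 ≤
          B * ∑ l ∈ c.support, ‖c l‖ ^ 2)

/-- The system `E(Λ)` is a frame for `L²(S)`: there are `0 < A ≤ B < ∞` such that
`A‖f‖² ≤ ∑_{λ∈Λ} |⟨f, e^{2πiλ·}⟩|² ≤ B‖f‖²` for all `f ∈ L²(S)`. -/
def IsFrameExp (Λ S : Set ℝ) : Prop :=
  ∃ A B : ℝ, 0 < A ∧ A ≤ B ∧
    ∀ f : ℝ → ℂ, MemLp f 2 (volume.restrict S) →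
      (A * ∫ x in S, ‖f x‖ ^ 2 ≤
          ∑' l : ↥Λ, ‖∫ x in S, f x * (starRingEnd ℂ) (expf (l : ℝ) x)‖ ^ 2) ∧
      (∑' l : ↥Λ, ‖∫ x in S, f x * (starRingEnd ℂ) (expf (l : ℝ) x)‖ ^ 2 ≤
          B * ∫ x in S, ‖f x‖ ^ 2)

/-- The system `E(Λ)` is complete in `L²(S)`. -/
def IsCompleteExp (Λ S : Set ℝ) : Prop :=
  ∀ f : ℝ → ℂ, MemLp f 2 (volume.restrict S) →
    (∀ l ∈ Λ, (∫ x in S, f x * (starRingEnd ℂ) (expf l x)) = 0) →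
    ∀ᵐ x ∂(volume.restrict S), f x = 0

/-- The system `E(Λ)` is a Riesz basis for `L²(S)`: a complete Riesz sequence. -/
def IsRieszBasisExp (Λ S : Set ℝ) : Prop :=
  IsRieszSeqExp Λ S ∧ IsCompleteExp Λ S

/-- `A_{≥n}(N,S) = {t ∈ [0,1/N) : t + k/N ∈ S for at least n values of k ∈ {0,…,N-1}}`. -/
def Ageq (N : ℕ) (S : Set ℝ) (n : ℕ) : Set ℝ :=
  {t : ℝ | t ∈ Set.Ico (0 : ℝ) (1 / (N : ℝ)) ∧
    n ≤ ((Finset.range N).filter (fun k => t + (k : ℝ) / (N : ℝ) ∈ S)).card}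

open scoped ENNReal ComplexConjugate InnerProductSpace

theorem le_mul_of_sq_le_mul_mul {x y K : ℝ} (hx : 0 ≤ x) (hy : 0 ≤ y) (hK : 0 ≤ K)
    (h : x ^ 2 ≤ K * x * y) : x ≤ K * y := by
  rcases hx.eq_or_lt with rfl | hx
  · positivity
  · nlinarith

section Duality

variable {𝕜 E ι : Type*} [RCLike 𝕜] [NormedAddCommGroup E] [InnerProductSpace 𝕜 E]

theorem forall_sum_norm_inner_sq_le_iff (v : ι → E) {K : ℝ} (hK : 0 ≤ K) :
    (∀ (x : E) (t : Finset ι), ∑ i ∈ t, ‖⟪v i, x⟫_𝕜‖ ^ 2 ≤ K * ‖x‖ ^ 2) ↔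
      ∀ (t : Finset ι) (c : ι → 𝕜), ‖∑ i ∈ t, c i • v i‖ ^ 2 ≤ K * ∑ i ∈ t, ‖c i‖ ^ 2 := by
  constructor
  · intro h t c
    set w := ∑ i ∈ t, c i • v i
    have hw : ‖w‖ ^ 2 ≤ ∑ i ∈ t, ‖c i‖ * ‖⟪v i, w⟫_𝕜‖ :=
      calc ‖w‖ ^ 2 = RCLike.re ⟪w, w⟫_𝕜 := (inner_self_eq_norm_sq w).symm
        _ ≤ ‖⟪w, w⟫_𝕜‖ := RCLike.re_le_norm _
        _ = ‖∑ i ∈ t, c i * ⟪w, v i⟫_𝕜‖ := by simp only [w, inner_sum, inner_smul_right]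
        _ ≤ ∑ i ∈ t, ‖c i‖ * ‖⟪v i, w⟫_𝕜‖ := by
          refine (norm_sum_le _ _).trans_eq (Finset.sum_congr rfl fun i _ => ?_)
          rw [norm_mul, norm_inner_symm]
    refine le_mul_of_sq_le_mul_mul (by positivity) (by positivity) hK ?_
    calc (‖w‖ ^ 2) ^ 2 ≤ (∑ i ∈ t, ‖c i‖ ^ 2) * ∑ i ∈ t, ‖⟪v i, w⟫_𝕜‖ ^ 2 :=
          (pow_le_pow_left₀ (by positivity) hw 2).trans (Finset.sum_mul_sq_le_sq_mul_sq _ _ _)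
      _ ≤ (∑ i ∈ t, ‖c i‖ ^ 2) * (K * ‖w‖ ^ 2) := by gcongr; exact h w t
      _ = K * ‖w‖ ^ 2 * ∑ i ∈ t, ‖c i‖ ^ 2 := by ring
  · intro h x t
    set w := ∑ i ∈ t, ⟪v i, x⟫_𝕜 • v i
    have hwx : ⟪w, x⟫_𝕜 = ((∑ i ∈ t, ‖⟪v i, x⟫_𝕜‖ ^ 2 : ℝ) : 𝕜) := by
      simp only [w, sum_inner, inner_smul_left, RCLike.conj_mul, RCLike.ofReal_sum,
        RCLike.ofReal_pow]
    refine le_mul_of_sq_le_mul_mul (by positivity) (by positivity) hK ?_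
    calc (∑ i ∈ t, ‖⟪v i, x⟫_𝕜‖ ^ 2) ^ 2 = ‖⟪w, x⟫_𝕜‖ ^ 2 := by
          rw [hwx, RCLike.norm_ofReal, abs_of_nonneg (by positivity)]
      _ ≤ ‖w‖ ^ 2 * ‖x‖ ^ 2 := by
          rw [← mul_pow]; exact pow_le_pow_left₀ (norm_nonneg _) (norm_inner_le_norm w x) 2
      _ ≤ K * (∑ i ∈ t, ‖⟪v i, x⟫_𝕜‖ ^ 2) * ‖x‖ ^ 2 := by gcongr; exact h t _

end Duality

namespace MeasureTheory

variable {α 𝕜 ι : Type*} [MeasurableSpace α] {μ : Measure α} [RCLike 𝕜]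

theorem Lp.norm_sq_eq_integral (F : Lp 𝕜 2 μ) : ‖F‖ ^ 2 = ∫ x, ‖F x‖ ^ 2 ∂μ := by
  rw [← inner_self_eq_norm_sq (𝕜 := 𝕜), L2.inner_def, ← integral_re (L2.integrable_inner F F)]
  simp only [inner_self_eq_norm_sq]

theorem MemLp.inner_toLp_toLp {f g : α → 𝕜} (hf : MemLp f 2 μ) (hg : MemLp g 2 μ) :
    ⟪hf.toLp f, hg.toLp g⟫_𝕜 = ∫ x, conj (f x) * g x ∂μ := by
  rw [L2.inner_def]
  refine integral_congr_ae ?_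
  filter_upwards [hf.coeFn_toLp, hg.coeFn_toLp] with x hfx hgx
  rw [RCLike.inner_apply, hfx, hgx, mul_comm]

theorem norm_sum_smul_toLp_sq (t : Finset ι) (c : ι → 𝕜) {e : ι → α → 𝕜}
    (he : ∀ i, MemLp (e i) 2 μ) :
    ‖∑ i ∈ t, c i • (he i).toLp (e i)‖ ^ 2 = ∫ x, ‖∑ i ∈ t, c i * e i x‖ ^ 2 ∂μ := by
  rw [Lp.norm_sq_eq_integral]
  refine integral_congr_ae ?_
  have hterm : ∀ᵐ x ∂μ, ∀ i ∈ t, (c i • (he i).toLp (e i)) x = c i * e i x := by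
    refine (Filter.eventually_all_finset t).2 fun i _ => ?_
    filter_upwards [Lp.coeFn_smul (c i) ((he i).toLp (e i)), (he i).coeFn_toLp] with x hs he
    rw [hs, Pi.smul_apply, he, smul_eq_mul]
  filter_upwards [Lp.coeFn_fun_finsetSum t fun i => c i • (he i).toLp (e i), hterm] with x hx hx'
  rw [hx, Finset.sum_congr rfl hx']

theorem forall_sum_norm_integral_mul_conj_sq_le_iff {e : ι → α → 𝕜} (he : ∀ i, MemLp (e i) 2 μ)
    {K : ℝ} (hK : 0 ≤ K) :
    (∀ f : α → 𝕜, MemLp f 2 μ → ∀ t : Finset ι,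
        ∑ i ∈ t, ‖∫ x, f x * conj (e i x) ∂μ‖ ^ 2 ≤ K * ∫ x, ‖f x‖ ^ 2 ∂μ) ↔
      ∀ (t : Finset ι) (c : ι → 𝕜),
        ∫ x, ‖∑ i ∈ t, c i * e i x‖ ^ 2 ∂μ ≤ K * ∑ i ∈ t, ‖c i‖ ^ 2 := by
  have hcoeff : ∀ {f : α → 𝕜} (hf : MemLp f 2 μ) (i : ι),
      ‖∫ x, f x * conj (e i x) ∂μ‖ = ‖⟪(he i).toLp (e i), hf.toLp f⟫_𝕜‖ := by
    intro f hf i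
    simp only [MemLp.inner_toLp_toLp, mul_comm]
  have hnorm : ∀ {f : α → 𝕜} (hf : MemLp f 2 μ), ∫ x, ‖f x‖ ^ 2 ∂μ = ‖hf.toLp f‖ ^ 2 := by
    intro f hf
    rw [Lp.norm_sq_eq_integral]
    exact integral_congr_ae (by filter_upwards [hf.coeFn_toLp] with x hx; rw [hx])
  simp only [← norm_sum_smul_toLp_sq _ _ he,
    ← forall_sum_norm_inner_sq_le_iff (fun i => (he i).toLp (e i)) hK]
  constructor
  · intro h F t
    have hF := Lp.memLp F
    simpa only [hcoeff hF, Lp.toLp_coeFn, Lp.norm_sq_eq_integral] using h F hF t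
  · intro h f hf t
    simpa only [hcoeff hf, hnorm hf] using h (hf.toLp f) t

end MeasureTheory

section Exponentials

theorem continuous_expf (l : ℝ) : Continuous (expf l) := by
  unfold expf; fun_prop

theorem norm_expf (l x : ℝ) : ‖expf l x‖ = 1 := by
  rw [expf, Complex.norm_exp]
  simp [Complex.mul_re, Complex.mul_im]

theorem memLp_expf (μ : Measure ℝ) [IsFiniteMeasure μ] (p : ℝ≥0∞) (l : ℝ) :
    MemLp (expf l) p μ :=
  .of_bound (continuous_expf l).aestronglyMeasurable 1 (.of_forall fun x => (norm_expf l x).le)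

theorem conj_expf_mul_expf (a b x : ℝ) : conj (expf a x) * expf b x = expf (b - a) x := by
  simp only [expf, ← Complex.exp_conj, ← Complex.exp_add, map_mul, Complex.conj_I,
    Complex.conj_ofReal, map_ofNat]
  congr 1
  push_cast
  ring

theorem integral_Ico_expf (n : ℤ) : ∫ x in Ico (0 : ℝ) 1, expf n x = if n = 0 then 1 else 0 := by
  split_ifs with hn
  · simp [hn, expf]
  · have hc : 2 * (π : ℂ) * Complex.I * ((n : ℝ) : ℂ) ≠ 0 := by simp [hn, Real.pi_ne_zero]
    rw [integral_Ico_eq_integral_Ioo, ← integral_Ioc_eq_integral_Ioo,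
      ← intervalIntegral.integral_of_le zero_le_one]
    simp only [expf]
    rw [integral_exp_mul_complex hc, show 2 * (π : ℂ) * Complex.I * ((n : ℝ) : ℂ) * ((1 : ℝ) : ℂ)
      = n * (2 * π * Complex.I) by push_cast; ring, Complex.exp_int_mul_two_pi_mul_I]
    simp

end Exponentials

theorem restrict_inter_Ioc_eq {S : Set ℝ} (hS : S ⊆ Ico 0 1) :
    volume.restrict (S ∩ Ioc 0 1) = volume.restrict S :=
  calc volume.restrict (S ∩ Ioc 0 1) = volume.restrict (S ∩ Ico 0 1) :=
        Measure.restrict_congr_set ((ae_eq_refl S).inter Ico_ae_eq_Ioc.symm)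
    _ = volume.restrict S := by rw [inter_eq_left.2 hS]

theorem intervalIntegral_indicator_eq_setIntegral {E : Type*} [NormedAddCommGroup E]
    [NormedSpace ℝ E] {S : Set ℝ} (hSm : MeasurableSet S) (hS : S ⊆ Ico 0 1) (F : ℝ → E) :
    ∫ x in (0 : ℝ)..1, S.indicator F x = ∫ x in S, F x := by
  rw [intervalIntegral.integral_of_le zero_le_one, setIntegral_indicator hSm, inter_comm,
    restrict_inter_Ioc_eq hS]

theorem hasSum_norm_integral_mul_conj_expf_sq {S : Set ℝ} (hSm : MeasurableSet S)
    (hS : S ⊆ Ico 0 1) {f : ℝ → ℂ} (hf : MemLp f 2 (volume.restrict S)) :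
    HasSum (fun n : ℤ => ‖∫ x in S, f x * conj (expf n x)‖ ^ 2) (∫ x in S, ‖f x‖ ^ 2) := by
  have hg : MemLp (S.indicator f) 2 (volume.restrict (Ioc 0 1)) := by
    rwa [memLp_indicator_iff_restrict hSm, Measure.restrict_restrict hSm, restrict_inter_Ioc_eq hS]
  convert hasSum_sq_fourierCoeffOn zero_lt_one hg using 1
  · funext n
    rw [fourierCoeffOn_eq_integral, sub_zero, div_one, one_smul,
      ← intervalIntegral_indicator_eq_setIntegral hSm hS]
    congr 2
    refine intervalIntegral.integral_congr fun x _ => ?_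
    by_cases hx : x ∈ S
    · simp only [indicator_of_mem hx, fourier_coe_apply, expf, ← Complex.exp_conj, smul_eq_mul]
      rw [mul_comm]
      congr 2
      simp only [map_mul, Complex.conj_I, Complex.conj_ofReal, map_ofNat]
      push_cast
      ring
    · simp [hx]
  · rw [sub_zero, inv_one, one_smul, ← intervalIntegral_indicator_eq_setIntegral hSm hS]
    congr 1 with x
    by_cases hx : x ∈ S <;> simp [hx]

section RieszSequence

theorem orthonormal_expf_toLp_Ico {Γ : Set ℝ} (hΓ : Γ ⊆ range ((↑) : ℤ → ℝ)) :
    Orthonormal ℂ fun l : Γ =>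
      (memLp_expf (volume.restrict (Ico (0 : ℝ) 1)) 2 l).toLp (expf l) := by
  rw [orthonormal_iff_ite]
  rintro ⟨a, ha⟩ ⟨b, hb⟩
  obtain ⟨m, rfl⟩ := hΓ ha
  obtain ⟨n, rfl⟩ := hΓ hb
  simp only [MemLp.inner_toLp_toLp, conj_expf_mul_expf, ← Int.cast_sub, integral_Ico_expf,
    sub_eq_zero, Subtype.mk.injEq, Int.cast_inj, eq_comm]

theorem integral_Ico_norm_sum_mul_expf_sq {Γ : Set ℝ} (hΓ : Γ ⊆ range ((↑) : ℤ → ℝ))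
    (t : Finset Γ) (c : Γ → ℂ) :
    ∫ x in Ico (0 : ℝ) 1, ‖∑ l ∈ t, c l * expf l x‖ ^ 2 = ∑ l ∈ t, ‖c l‖ ^ 2 := by
  rw [← norm_sum_smul_toLp_sq t c fun l => memLp_expf _ 2 l]
  simpa using (orthonormal_expf_toLp_Ico hΓ).orthogonalFamily.norm_sum c t

theorem integral_add_integral_Ico_diff_norm_sum_mul_expf_sq {S : Set ℝ} (hSm : MeasurableSet S)
    (hS : S ⊆ Ico 0 1) {Γ : Set ℝ} (hΓ : Γ ⊆ range ((↑) : ℤ → ℝ)) (t : Finset Γ) (c : Γ → ℂ) :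
    (∫ x in S, ‖∑ l ∈ t, c l * expf l x‖ ^ 2) + ∫ x in Ico 0 1 \ S, ‖∑ l ∈ t, c l * expf l x‖ ^ 2
      = ∑ l ∈ t, ‖c l‖ ^ 2 := by
  have hcont : Continuous fun x => ‖∑ l ∈ t, c l * expf l x‖ ^ 2 := by
    have := fun l : Γ => continuous_expf l
    fun_prop
  rw [← integral_Ico_norm_sum_mul_expf_sq hΓ, ← integral_inter_add_sdiff hSm
    (hcont.integrableOn_Icc.mono_set Ico_subset_Icc_self), inter_eq_right.2 hS]

theorem isRieszSeqExp_iff {S : Set ℝ} (hSm : MeasurableSet S) (hS : S ⊆ Ico 0 1) {Γ : Set ℝ}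
    (hΓ : Γ ⊆ range ((↑) : ℤ → ℝ)) :
    IsRieszSeqExp Γ (Ico 0 1 \ S) ↔ ∃ K : ℝ, 0 ≤ K ∧ K < 1 ∧ ∀ (t : Finset Γ) (c : Γ → ℂ),
      ∫ x in S, ‖∑ l ∈ t, c l * expf l x‖ ^ 2 ≤ K * ∑ l ∈ t, ‖c l‖ ^ 2 := by
  have hsplit := integral_add_integral_Ico_diff_norm_sum_mul_expf_sq hSm hS hΓ
  constructor
  · rintro ⟨A, B, hA, -, h⟩
    refine ⟨1 - min A 1, by linarith [min_le_right A 1], by linarith [lt_min hA one_pos],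
      fun t c => ?_⟩
    set c' : Γ →₀ ℂ := Finsupp.indicator t fun l _ => c l
    have hnorm : ∑ l ∈ c'.support, ‖c' l‖ ^ 2 = ∑ l ∈ t, ‖c l‖ ^ 2 :=
      Finsupp.sum_indicator_index (h := fun _ a => ‖a‖ ^ 2) c (by simp)
    have hpoly : ∀ x, ∑ l ∈ c'.support, c' l * expf l x = ∑ l ∈ t, c l * expf l x := fun x =>
      Finsupp.sum_indicator_index (h := fun l a => a * expf l x) c (by simp)
    have hlower := (h c').1
    simp only [hnorm, hpoly] at hlower
    have hmin : min A 1 * ∑ l ∈ t, ‖c l‖ ^ 2 ≤ A * ∑ l ∈ t, ‖c l‖ ^ 2 := by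
      gcongr; exact min_le_left A 1
    linarith [hsplit t c]
  · rintro ⟨K, hK0, hK1, h⟩
    refine ⟨1 - K, 1, by linarith, by linarith, fun c => ?_⟩
    have hSnn : 0 ≤ ∫ x in S, ‖∑ l ∈ c.support, c l * expf l x‖ ^ 2 := by positivity
    constructor <;> linarith [h c.support c, hsplit c.support c]

end RieszSequence

section Frame

variable {M : Type*} [NormedAddCommGroup M] [CompleteSpace M]

theorem Summable.intCast_image {a : ℝ → M} (h : Summable fun n : ℤ => a n) (E : Set ℤ) :
    Summable fun l : (fun m : ℤ => (m : ℝ)) '' E => a l := by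
  have hE : Summable fun n : E => a n := h.subtype E
  exact (Equiv.Set.image (fun m : ℤ => (m : ℝ)) E Int.cast_injective).summable_iff.1 hE

theorem HasSum.tsum_intCast_image_add_tsum_intCast_image_compl {a : ℝ → M} {s : M}
    (h : HasSum (fun n : ℤ => a n) s) (E : Set ℤ) :
    ∑' l : (fun m : ℤ => (m : ℝ)) '' E, a l + ∑' l : (fun m : ℤ => (m : ℝ)) '' Eᶜ, a l = s := by
  have himage : ∀ F : Set ℤ, ∑' l : (fun m : ℤ => (m : ℝ)) '' F, a l = ∑' n : F, a n := fun F =>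
    ((Equiv.Set.image (fun m : ℤ => (m : ℝ)) F Int.cast_injective).tsum_eq
      fun l : (fun m : ℤ => (m : ℝ)) '' F => a l).symm
  rw [himage, himage, (h.summable.subtype E).tsum_add_tsum_compl (h.summable.subtype Eᶜ),
    h.tsum_eq]

theorem isFrameExp_iff {S : Set ℝ} (hSm : MeasurableSet S) (hS : S ⊆ Ico 0 1) (Λ : Set ℤ) :
    IsFrameExp ((fun m : ℤ => (m : ℝ)) '' Λ) S ↔ ∃ K : ℝ, 0 ≤ K ∧ K < 1 ∧
      ∀ f : ℝ → ℂ, MemLp f 2 (volume.restrict S) → ∀ t : Finset ((fun m : ℤ => (m : ℝ)) '' Λᶜ),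
        ∑ l ∈ t, ‖∫ x in S, f x * conj (expf l x)‖ ^ 2 ≤ K * ∫ x in S, ‖f x‖ ^ 2 := by
  constructor
  · rintro ⟨A, B, hA, -, h⟩
    refine ⟨1 - min A 1, by linarith [min_le_right A 1], by linarith [lt_min hA one_pos],
      fun f hf t => ?_⟩
    have hP := hasSum_norm_integral_mul_conj_expf_sq hSm hS hf
    have hsplit := hP.tsum_intCast_image_add_tsum_intCast_image_compl
      (a := fun y => ‖∫ x in S, f x * conj (expf y x)‖ ^ 2) Λ
    have hsum := (hP.summable.intCast_image
      (a := fun y => ‖∫ x in S, f x * conj (expf y x)‖ ^ 2) Λᶜ).sum_le_tsum t fun _ _ => sq_nonneg _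
    have hmin : min A 1 * ∫ x in S, ‖f x‖ ^ 2 ≤ A * ∫ x in S, ‖f x‖ ^ 2 := by
      gcongr; exact min_le_left A 1
    linarith [(h f hf).1]
  · rintro ⟨K, hK0, hK1, h⟩
    refine ⟨1 - K, 1, by linarith, by linarith, fun f hf => ?_⟩
    have hP := hasSum_norm_integral_mul_conj_expf_sq hSm hS hf
    have hcompl : ∑' l : (fun m : ℤ => (m : ℝ)) '' Λᶜ, ‖∫ x in S, f x * conj (expf l x)‖ ^ 2
        ≤ K * ∫ x in S, ‖f x‖ ^ 2 :=
      Real.tsum_le_of_sum_le (fun _ => sq_nonneg _) (h f hf)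
    have hnn : 0 ≤ ∑' l : (fun m : ℤ => (m : ℝ)) '' Λᶜ, ‖∫ x in S, f x * conj (expf l x)‖ ^ 2 :=
      tsum_nonneg fun _ => sq_nonneg _
    have hsplit := hP.tsum_intCast_image_add_tsum_intCast_image_compl
      (a := fun y => ‖∫ x in S, f x * conj (expf y x)‖ ^ 2) Λ
    constructor <;> linarith

end Frame

/-- `E(Λ)` is a frame for `L²(S)` iff `E(ℤ \ Λ)` is a Riesz sequence
in `L²([0,1) \ S)`. -/
theorem stmt11 (Λ : Set ℤ) (S : Set ℝ) (hSm : MeasurableSet S)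
    (hS : S ⊆ Set.Ico (0 : ℝ) 1) :
    IsFrameExp ((fun m : ℤ => (m : ℝ)) '' Λ) S ↔
      IsRieszSeqExp ((fun m : ℤ => (m : ℝ)) '' (Set.univ \ Λ)) (Set.Ico (0 : ℝ) 1 \ S) := by
  have : IsFiniteMeasure (volume.restrict S) :=
    isFiniteMeasure_of_le _ (Measure.restrict_mono hS le_rfl)
  rw [← compl_eq_univ_sdiff, isFrameExp_iff hSm hS,
    isRieszSeqExp_iff hSm hS (image_subset_range (fun m : ℤ => (m : ℝ)) _)]
  refine exists_congr fun K => and_congr_right fun hK => and_congr_right fun _ => ?_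
  exact forall_sum_norm_integral_mul_conj_sq_le_iff (ι := (fun m : ℤ => (m : ℝ)) '' Λᶜ)
    (fun l => memLp_expf (volume.restrict S) 2 l) hK
end

section
/- Let N be a prime number and let 1 ≤ n ≤ N. There exists a constant c' > 0, depending only on N and n, such that for all distinct residues j_1, …, j_n ∈ {1, …, N}, all distinct indices k_1 < k_2 < … < k_n in {0, 1, …, N−1}, and all complex vectors (v_1, …, v_n) ∈ ℂ^n, one has Σ_{ℓ=1}^n |Σ_{r=1}^n v_r e^{−2πi j_ℓ k_r / N}|² ≥ c' Σ_{r=1}^n |v_r|². -/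
/-!
Write `D_k(x) = det (x_l ^ k_r)`. In `ℤ[x_1, …, x_n]` the Vandermonde product `V(x)` divides
`D_k(x)`; put `Q = D_k / V`. Substituting `x_l = X ^ l` and letting `X → 1` gives
`∏_{i<j} (k_j - k_i) = ∏_{i<j} (j - i) · Q(1, …, 1)`, so `N ∤ Q(1, …, 1)` when the `k_r` are
distinct and lie in `[0, N)`. If the determinant vanished at `x_l = ζ ^ j_l`, then `Q` would vanish
there too, since `V` does not; the polynomial `Q(X ^ j_1, …, X ^ j_n)` would then be divisible by
the cyclotomic polynomial `Φ_N`, and evaluating at `1` gives `N ∣ Q(1, …, 1)`. This is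
Chebotarëv's theorem. The lower bound follows because an invertible matrix is bounded below in
`ℓ²`, and only finitely many matrices have `N`-th roots of unity as entries.
-/

open MvPolynomial Finset Matrix Function Filter Topology

theorem Matrix.dvd_det_of_dvd_row_sub {R ι : Type*} [CommRing R] [Fintype ι] [DecidableEq ι]
    (M : Matrix ι ι R) {a b : ι} (hab : a ≠ b) {d : R} (hd : ∀ r, d ∣ M a r - M b r) :
    d ∣ M.det := by
  choose w hw using hd
  have hrow : M a + (-1 : R) • M b = d • w := by
    ext r
    simpa [← sub_eq_add_neg] using hw r
  rw [← det_updateRow_add_smul_self M hab (-1), hrow, det_updateRow_smul]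
  exact dvd_mul_right _ _

section GenVandermonde

variable {R : Type*} [CommRing R] {n : ℕ}

def genVandermonde (x : Fin n → R) (k : Fin n → ℕ) : Matrix (Fin n) (Fin n) R :=
  of fun l r => x l ^ k r

theorem vandermonde_eq_genVandermonde (x : Fin n → R) :
    vandermonde x = genVandermonde x fun r => r :=
  rfl

theorem RingHom.map_det_genVandermonde {S : Type*} [CommRing S] (f : R →+* S) (x : Fin n → R)
    (k : Fin n → ℕ) : f (genVandermonde x k).det = (genVandermonde (f ∘ x) k).det := by
  rw [f.map_det]
  congr 1
  ext l r
  simp [genVandermonde]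

theorem det_genVandermonde_pow (x : R) (k : Fin n → ℕ) :
    (genVandermonde (fun l => x ^ (l : ℕ)) k).det = (vandermonde fun r => x ^ k r).det := by
  rw [← det_transpose]
  congr 1
  ext l r
  simp [genVandermonde, vandermonde_apply, ← pow_mul, mul_comm]

theorem det_vandermonde_pow_eq_mul (x : R) (a : Fin n → ℕ) :
    (vandermonde fun i => x ^ a i).det =
      (vandermonde fun i => ∑ m ∈ range (a i), x ^ m).det * ∏ i : Fin n, ∏ _j ∈ Ioi i, (x - 1) := by
  simp only [det_vandermonde, ← prod_mul_distrib, sub_mul, geom_sum_mul]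
  simp

end GenVandermonde

section Divisibility

variable {R σ : Type*} [CommRing R] [IsDomain R] {n : ℕ}

theorem MvPolynomial.prime_X_sub_X [DecidableEq σ] {a b : σ} (h : a ≠ b) :
    Prime (X b - X a : MvPolynomial σ R) := by
  let e : σ ≃ Option {i : σ // i ≠ b} := (Equiv.optionSubtypeNe b).symm
  let E := (renameEquiv R e).trans (optionEquivLeft R {i : σ // i ≠ b})
  rw [← MulEquiv.prime_iff E.toMulEquiv]
  have hb : e b = none := Equiv.optionSubtypeNe_symm_self b
  have ha : e a = some ⟨a, h⟩ := Equiv.optionSubtypeNe_symm_of_ne h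
  have hE : E (X b - X a) = Polynomial.X - Polynomial.C (X ⟨a, h⟩) := by
    simp only [E, AlgEquiv.trans_apply, map_sub, renameEquiv_apply, rename_X, hb, ha,
      optionEquivLeft_X_none, optionEquivLeft_X_some]
  exact hE ▸ Polynomial.prime_X_sub_C _

theorem MvPolynomial.X_sub_X_not_dvd [DecidableEq σ] {a b c d : σ} (hcd : c ≠ d) (hda : d ≠ a)
    (hdb : d ≠ b) : ¬ (X b - X a : MvPolynomial σ R) ∣ X d - X c := by
  intro h
  have h1 := map_dvd (eval (Pi.single d 1)) h
  simp [hda.symm, hdb.symm, hcd] at h1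

theorem MvPolynomial.isRelPrime_X_sub_X {a b c d : Fin n} (hab : a < b) (hcd : c < d)
    (hne : (a, b) ≠ (c, d)) : IsRelPrime (X b - X a : MvPolynomial (Fin n) R) (X d - X c) := by
  rw [(prime_X_sub_X hab.ne).irreducible.isRelPrime_iff_not_dvd]
  by_cases hd : d ≠ a ∧ d ≠ b
  · exact X_sub_X_not_dvd hcd.ne hd.1 hd.2
  by_cases hc : c ≠ a ∧ c ≠ b
  · rw [← neg_sub (X c) (X d), dvd_neg]
    exact X_sub_X_not_dvd hcd.ne' hc.1 hc.2
  refine absurd ?_ hne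
  have hd' : d = a ∨ d = b := by tauto
  have hc' : c = a ∨ c = b := by tauto
  rcases hd' with rfl | rfl <;> rcases hc' with rfl | rfl <;> first | rfl | order

theorem det_vandermonde_X_dvd_det_genVandermonde [UniqueFactorizationMonoid R] (k : Fin n → ℕ) :
    (vandermonde (X : Fin n → MvPolynomial (Fin n) R)).det ∣ (genVandermonde X k).det := by
  rw [det_vandermonde, prod_sigma']
  refine prod_dvd_of_isRelPrime ?_ fun p hp => ?_
  · rintro ⟨a, b⟩ hab ⟨c, d⟩ hcd hne
    simp only [coe_sigma, Set.mem_sigma_iff, coe_univ, Set.mem_univ, coe_Ioi, Set.mem_Ioi,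
      true_and] at hab hcd
    exact isRelPrime_X_sub_X hab hcd (by simpa using hne)
  · exact dvd_det_of_dvd_row_sub _ (mem_Ioi.1 (mem_sigma.1 hp).2).ne' fun r =>
      sub_dvd_pow_sub_pow _ _ _

end Divisibility

/-- Substitute `x_l = X ^ l`: both determinants become Vandermonde determinants in powers of `X`,
each the common factor `(X - 1) ^ (n choose 2)` times one whose value at `X = 1` is read off. -/
theorem det_vandermonde_natCast_eq_mul_eval_one {n : ℕ} {k : Fin n → ℕ}
    {Q : MvPolynomial (Fin n) ℤ}
    (hQ : (genVandermonde X k).det = (vandermonde (X : Fin n → MvPolynomial (Fin n) ℤ)).det * Q) :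
    (vandermonde fun r => (k r : ℤ)).det =
      (vandermonde fun r : Fin n => ((r : ℕ) : ℤ)).det * eval 1 Q := by
  let E : MvPolynomial (Fin n) ℤ →+* Polynomial ℤ :=
    (aeval fun l : Fin n => (Polynomial.X : Polynomial ℤ) ^ (l : ℕ)).toRingHom
  have hE : E ∘ X = fun l : Fin n => (Polynomial.X : Polynomial ℤ) ^ (l : ℕ) := by
    ext1 l
    simp [E]
  have h := congrArg E hQ
  rw [map_mul, E.map_det_genVandermonde, vandermonde_eq_genVandermonde, E.map_det_genVandermonde,
    hE, det_genVandermonde_pow, det_genVandermonde_pow, det_vandermonde_pow_eq_mul,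
    det_vandermonde_pow_eq_mul, mul_right_comm] at h
  have hX : (Polynomial.X - 1 : Polynomial ℤ) ≠ 0 := Polynomial.X_sub_C_ne_zero 1
  have h1 := congrArg (Polynomial.evalRingHom 1)
    (mul_right_cancel₀ (prod_ne_zero_iff.2 fun _ _ => prod_ne_zero_iff.2 fun _ _ => hX) h)
  rw [map_mul, vandermonde_eq_genVandermonde, RingHom.map_det_genVandermonde,
    vandermonde_eq_genVandermonde, RingHom.map_det_genVandermonde] at h1
  have hQ1 : Polynomial.evalRingHom 1 (E Q) = eval 1 Q := by
    rw [← RingHom.comp_apply]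
    congr 1
    ext <;> simp [E]
  simpa [hQ1, Function.comp_def, vandermonde_eq_genVandermonde] using h1

theorem natCast_dvd_eval_one_of_aeval_pow_eq_zero {K σ : Type*} [Field K] [CharZero K] {N : ℕ}
    (hN : N.Prime) {ζ : K} (hζ : IsPrimitiveRoot ζ N) (j : σ → ℕ) {P : MvPolynomial σ ℤ}
    (hP : aeval (fun l => ζ ^ j l) P = 0) : (N : ℤ) ∣ eval 1 P := by
  have := Fact.mk hN
  set R := aeval (fun l => (Polynomial.X : Polynomial ℤ) ^ j l) P
  have hR : Polynomial.aeval ζ R = 0 := by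
    rw [← hP, ← AlgHom.comp_apply, comp_aeval]
    simp
  have hdvd : Polynomial.cyclotomic N ℤ ∣ R := by
    rw [Polynomial.cyclotomic_eq_minpoly hζ hN.pos]
    exact minpoly.isIntegrallyClosed_dvd (hζ.isIntegral hN.pos) hR
  have hR1 : Polynomial.eval 1 R = eval 1 P := by
    rw [← Polynomial.coe_aeval_eq_eval, ← AlgHom.comp_apply, comp_aeval]
    simp [← Pi.one_def]
  simpa [hR1, Polynomial.eval_one_cyclotomic_prime] using Polynomial.eval_dvd (x := 1) hdvd

theorem not_natCast_dvd_det_vandermonde {N n : ℕ} (hN : N.Prime) {k : Fin n → ℕ}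
    (hk : Injective k) (hkN : ∀ r, k r < N) :
    ¬ (N : ℤ) ∣ (vandermonde fun r => (k r : ℤ)).det := by
  rw [det_vandermonde]
  intro h
  obtain ⟨a, -, ha⟩ := (Nat.prime_iff_prime_int.1 hN).dvd_finsetProd_iff _ |>.1 h
  obtain ⟨b, hb, hab⟩ := (Nat.prime_iff_prime_int.1 hN).dvd_finsetProd_iff _ |>.1 ha
  have := Int.eq_zero_of_abs_lt_dvd hab (by have := hkN a; have := hkN b; rw [abs_lt]; omega)
  exact (mem_Ioi.1 hb).ne' (hk (by omega))

theorem det_genVandermonde_pow_ne_zero {K : Type*} [Field K] [CharZero K] {N n : ℕ}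
    (hN : N.Prime) {ζ : K} (hζ : IsPrimitiveRoot ζ N) {j k : Fin n → ℕ}
    (hj : Injective fun l => ζ ^ j l) (hk : Injective k) (hkN : ∀ r, k r < N) :
    (genVandermonde (fun l => ζ ^ j l) k).det ≠ 0 := by
  obtain ⟨Q, hQ⟩ := det_vandermonde_X_dvd_det_genVandermonde (R := ℤ) k
  let ev := (aeval fun l => ζ ^ j l : MvPolynomial (Fin n) ℤ →ₐ[ℤ] K).toRingHom
  have hev : ev ∘ X = fun l => ζ ^ j l := by
    ext1 l
    simp [ev]
  have h := congrArg ev hQ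
  rw [map_mul, ev.map_det_genVandermonde, vandermonde_eq_genVandermonde,
    ev.map_det_genVandermonde, hev, ← vandermonde_eq_genVandermonde] at h
  intro h0
  have hQ0 : ev Q = 0 := (mul_eq_zero.1 (h ▸ h0)).resolve_left (det_vandermonde_ne_zero_iff.2 hj)
  exact not_natCast_dvd_det_vandermonde hN hk hkN
    ((natCast_dvd_eval_one_of_aeval_pow_eq_zero hN hζ j hQ0).trans
      (Dvd.intro_left _ (det_vandermonde_natCast_eq_mul_eval_one hQ).symm))

theorem IsPrimitiveRoot.injOn_pow_Icc {K : Type*} [CommRing K] [IsDomain K] {ζ : K} {N : ℕ}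
    (hζ : IsPrimitiveRoot ζ N) : Set.InjOn (ζ ^ ·) (Set.Icc 1 N) := by
  intro a ha b hb h
  have h' : ζ ^ (a - 1) = ζ ^ (b - 1) := mul_left_cancel₀ (hζ.ne_zero (by grind)) <| by
    rwa [← pow_succ', ← pow_succ', Nat.sub_add_cancel ha.1, Nat.sub_add_cancel hb.1]
  have := hζ.pow_inj (by grind) (by grind) h'
  grind

theorem Matrix.finite_setOf_forall_pow_eq_one {K m : Type*} [CommRing K] [IsDomain K] [Finite m]
    {N : ℕ} (hN : 0 < N) : {A : Matrix m m K | ∀ i j, A i j ^ N = 1}.Finite := by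
  classical
  have hroots : {z : K | z ^ N = 1}.Finite :=
    (Polynomial.nthRoots N (1 : K)).toFinset.finite_toSet.subset fun z hz => by
      simpa [Polynomial.mem_nthRoots hN] using hz
  exact (Set.Finite.pi fun _ => Set.Finite.pi fun _ => hroots).subset fun A hA i _ j _ => hA i j

section Analytic

variable {𝕜 ι : Type*} [RCLike 𝕜] [Fintype ι] [DecidableEq ι]

theorem Matrix.sum_norm_sq_le_mul_sum_norm_mulVec_sq {A : Matrix ι ι 𝕜} (hA : IsUnit A.det)
    (v : ι → 𝕜) :
    ∑ i, ‖v i‖ ^ 2 ≤ ‖toEuclideanCLM (𝕜 := 𝕜) A⁻¹‖ ^ 2 * ∑ i, ‖(A *ᵥ v) i‖ ^ 2 := by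
  have hv : WithLp.toLp 2 v = toEuclideanCLM (𝕜 := 𝕜) A⁻¹ (WithLp.toLp 2 (A *ᵥ v)) := by
    rw [toEuclideanCLM_toLp, mulVec_mulVec, nonsing_inv_mul _ hA, one_mulVec]
  have h := (toEuclideanCLM (𝕜 := 𝕜) A⁻¹).le_opNorm (WithLp.toLp 2 (A *ᵥ v))
  rw [← hv] at h
  have h2 := pow_le_pow_left₀ (norm_nonneg _) h 2
  rwa [mul_pow, EuclideanSpace.norm_sq_eq, EuclideanSpace.norm_sq_eq] at h2

theorem Matrix.exists_pos_forall_mem_mul_sum_norm_sq_le {s : Set (Matrix ι ι 𝕜)} (hs : s.Finite) :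
    ∃ c > 0, ∀ A ∈ s, IsUnit A.det →
      ∀ v : ι → 𝕜, c * ∑ i, ‖v i‖ ^ 2 ≤ ∑ i, ‖(A *ᵥ v) i‖ ^ 2 := by
  have h : ∀ A ∈ s, ∀ᶠ c in 𝓝[>] (0 : ℝ), IsUnit A.det →
      ∀ v : ι → 𝕜, c * ∑ i, ‖v i‖ ^ 2 ≤ ∑ i, ‖(A *ᵥ v) i‖ ^ 2 := by
    intro A _
    set K := ‖toEuclideanCLM (𝕜 := 𝕜) A⁻¹‖ ^ 2
    have hK : 0 ≤ K := by positivity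
    filter_upwards [nhdsWithin_le_nhds (eventually_le_nhds (inv_pos.2 (by positivity : 0 < K + 1))),
      self_mem_nhdsWithin] with c hcK (hc : 0 < c) hA v
    have hcK' : c * K ≤ 1 :=
      calc c * K ≤ c * (K + 1) := by gcongr; linarith
        _ ≤ 1 := by rwa [← le_div_iff₀ (by positivity), one_div]
    calc c * ∑ i, ‖v i‖ ^ 2 ≤ c * (K * ∑ i, ‖(A *ᵥ v) i‖ ^ 2) :=
          mul_le_mul_of_nonneg_left (sum_norm_sq_le_mul_sum_norm_mulVec_sq hA v) hc.le
      _ = c * K * ∑ i, ‖(A *ᵥ v) i‖ ^ 2 := (mul_assoc _ _ _).symm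
      _ ≤ ∑ i, ‖(A *ᵥ v) i‖ ^ 2 := mul_le_of_le_one_left (by positivity) hcK'
  obtain ⟨c, hc, hpos⟩ := (((eventually_all_finite hs).2 h).and self_mem_nhdsWithin).exists
  exact ⟨c, hpos, hc⟩

end Analytic

theorem stmt15_general (N : ℕ) (hN : N.Prime) (n : ℕ) :
    ∃ c' : ℝ, 0 < c' ∧
      ∀ (j : Fin n → ℕ), (∀ l, j l ∈ Finset.Icc 1 N) → Function.Injective j →
      ∀ (k : Fin n → ℕ), (∀ r, k r < N) → StrictMono k →
      ∀ v : Fin n → ℂ,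
        c' * ∑ r, ‖v r‖ ^ 2 ≤
          ∑ l, ‖∑ r, v r * Complex.exp (-(2 * (Real.pi : ℂ) * Complex.I *
            ((j l : ℂ) * (k r : ℂ))) / (N : ℂ))‖ ^ 2 := by
  set ζ : ℂ := Complex.exp (-(2 * (Real.pi : ℂ) * Complex.I) / N)
  have hζ : IsPrimitiveRoot ζ N := by
    simpa [ζ, neg_div, Complex.exp_neg] using (Complex.isPrimitiveRoot_exp N hN.ne_zero).inv
  have hexp (a b : ℕ) : Complex.exp (-(2 * (Real.pi : ℂ) * Complex.I * ((a : ℂ) * (b : ℂ))) / N) =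
      (ζ ^ a) ^ b := by
    rw [← pow_mul, ← Complex.exp_nat_mul]
    push_cast
    ring_nf
  obtain ⟨c, hc, hcs⟩ := exists_pos_forall_mem_mul_sum_norm_sq_le
    (finite_setOf_forall_pow_eq_one (K := ℂ) (m := Fin n) hN.pos)
  refine ⟨c, hc, fun j hj hjinj k hkN hk v => ?_⟩
  have hζj : Injective fun l => ζ ^ j l := fun l l' h =>
    hjinj (hζ.injOn_pow_Icc (Finset.mem_Icc.1 (hj l)) (Finset.mem_Icc.1 (hj l')) h)
  have hroots (l r : Fin n) : genVandermonde (fun l => ζ ^ j l) k l r ^ N = 1 := by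
    change ((ζ ^ j l) ^ k r) ^ N = 1
    rw [pow_right_comm, pow_right_comm ζ, hζ.pow_eq_one, one_pow, one_pow]
  refine (hcs _ hroots (det_genVandermonde_pow_ne_zero hN hζ hζj hk.injective hkN).isUnit v).trans_eq
    (sum_congr rfl fun l _ => ?_)
  simp only [hexp, mulVec, dotProduct, genVandermonde, of_apply]
  simp only [mul_comm]

/-- A uniform lower bound, depending only on the prime `N` and on `n`, for
`n × n` submatrices of the `N × N` discrete Fourier matrix (Chebotarëv's theorem on roots of
unity gives their invertibility). -/
theorem stmt15 (N : ℕ) (hN : N.Prime) (n : ℕ) (hn1 : 1 ≤ n) (hnN : n ≤ N) :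
    ∃ c' : ℝ, 0 < c' ∧
      ∀ (j : Fin n → ℕ), (∀ l, j l ∈ Finset.Icc 1 N) → Function.Injective j →
      ∀ (k : Fin n → ℕ), (∀ r, k r < N) → StrictMono k →
      ∀ v : Fin n → ℂ,
        c' * ∑ r, ‖v r‖ ^ 2 ≤
          ∑ l, ‖∑ r, v r * Complex.exp (-(2 * (Real.pi : ℂ) * Complex.I *
            ((j l : ℂ) * (k r : ℂ))) / (N : ℂ))‖ ^ 2 :=
  stmt15_general N hN n
end
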